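/- arXiv:1612.02723 — 3 statements merged into one kernel-verified Lean document; each statement's English description precedes it below -/
import Mathlib

section
/- Let R be a commutative ring and M, N two R-modules. Then tr(M)·tr(N) ⊆ tr(M ⊗_R N) ⊆ tr(M) ∩ tr(N), where tr denotes the trace ideal of a module. -/
open TensorProduct

/-- The trace ideal of an `R`-module `M`: the sum of the images of all
`R`-linear maps `M → R`. -/
def traceIdeal (R : Type*) [CommRing R] (M : Type*) [AddCommGroup M] [Module R M] : Ideal R :=
  ⨆ φ : M →ₗ[R] R, LinearMap.range φ

/-!
A linear form on `M ⊗ N` restricts, along `m ↦ m ⊗ n` and `n ↦ m ⊗ n`, to linear forms on `M`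
and on `N`; since the pure tensors generate `M ⊗ N`, its values lie in `tr(M)` and in `tr(N)`.
Conversely `φ ⊗ ψ` is a linear form on `M ⊗ N` taking the value `φ m * ψ n` at `m ⊗ n`.
-/

section traceIdeal

variable {R : Type*} [CommRing R] {M P : Type*} [AddCommGroup M] [Module R M]
  [AddCommGroup P] [Module R P]

theorem range_le_traceIdeal (φ : M →ₗ[R] R) : LinearMap.range φ ≤ traceIdeal R M :=
  le_iSup (fun φ : M →ₗ[R] R => LinearMap.range φ) φ

theorem apply_mem_traceIdeal (φ : M →ₗ[R] R) (m : M) : φ m ∈ traceIdeal R M :=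
  range_le_traceIdeal φ ⟨m, rfl⟩

theorem traceIdeal_le_of_iSup_range_eq_top {ι : Sort*} (f : ι → M →ₗ[R] P)
    (hf : ⨆ i, LinearMap.range (f i) = ⊤) : traceIdeal R P ≤ traceIdeal R M := by
  refine iSup_le fun χ => ?_
  calc LinearMap.range χ = (⨆ i, LinearMap.range (f i)).map χ := by rw [hf, Submodule.map_top]
    _ = ⨆ i, LinearMap.range (χ ∘ₗ f i) := by
      simp only [Submodule.map_iSup, LinearMap.range_comp]
    _ ≤ traceIdeal R M := iSup_le fun i => range_le_traceIdeal _

theorem traceIdeal_mul_traceIdeal_le {N : Type*} [AddCommGroup N] [Module R N] {I : Ideal R}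
    (h : ∀ (φ : M →ₗ[R] R) (ψ : N →ₗ[R] R) m n, φ m * ψ n ∈ I) :
    traceIdeal R M * traceIdeal R N ≤ I := by
  simp only [traceIdeal, Submodule.iSup_mul, Submodule.mul_iSup, iSup_le_iff]
  intro ψ φ
  rw [Submodule.mul_le]
  rintro _ ⟨m, rfl⟩ _ ⟨n, rfl⟩
  exact h φ ψ m n

end traceIdeal

namespace TensorProduct

variable {R : Type*} [CommRing R] {M N : Type*} [AddCommGroup M] [Module R M]
  [AddCommGroup N] [Module R N]

theorem iSup_range_mk_flip_eq_top : ⨆ n : N, LinearMap.range ((mk R M N).flip n) = ⊤ := by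
  rw [eq_top_iff, ← span_tmul_eq_top, Submodule.span_le]
  rintro _ ⟨m, n, rfl⟩
  exact Submodule.mem_iSup_of_mem n ⟨m, rfl⟩

theorem iSup_range_mk_eq_top : ⨆ m : M, LinearMap.range (mk R M N m) = ⊤ := by
  rw [eq_top_iff, ← span_tmul_eq_top, Submodule.span_le]
  rintro _ ⟨m, n, rfl⟩
  exact Submodule.mem_iSup_of_mem m ⟨n, rfl⟩

end TensorProduct

/-- For `R`-modules `M`, `N` one has `tr(M)·tr(N) ⊆ tr(M ⊗_R N) ⊆ tr(M) ∩ tr(N)`. -/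
theorem trace_tensor_product (R : Type*) [CommRing R]
    (M N : Type*) [AddCommGroup M] [Module R M] [AddCommGroup N] [Module R N] :
    traceIdeal R M * traceIdeal R N ≤ traceIdeal R (M ⊗[R] N) ∧
      traceIdeal R (M ⊗[R] N) ≤ traceIdeal R M ⊓ traceIdeal R N := by
  refine ⟨traceIdeal_mul_traceIdeal_le fun φ ψ m n => ?_, le_inf ?_ ?_⟩
  · rw [← dualDistrib_apply]
    exact apply_mem_traceIdeal _ _
  · exact traceIdeal_le_of_iSup_range_eq_top _ iSup_range_mk_flip_eq_top
  · exact traceIdeal_le_of_iSup_range_eq_top _ iSup_range_mk_eq_top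
end

section
/- Let e > 2 and H = ⟨a, a+d, …, a+(e−1)d⟩ with gcd(a,d) = 1, d ≥ 1, and e ≤ a. Write a = k(e−1) + τ + 1 with 1 ≤ τ ≤ e−1 and k = ⌊(a−2)/(e−1)⌋. Then the set of pseudo-Frobenius numbers of H is PF(H) = {Fr(H) − (τ−1)d, …, Fr(H) − d, Fr(H)} with Fr(H) = ak + d(a−1). In particular, the type of H is τ. -/
/-- The set of integers belonging to the numerical semigroup `H ⊆ ℕ`. -/
def HZ (H : AddSubmonoid ℕ) : Set ℤ := {z : ℤ | ∃ h ∈ H, (h : ℤ) = z}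

/-- The set of pseudo-Frobenius numbers of `H`: the `f ∉ H` with `f + h ∈ H`
for every nonzero `h ∈ H`. -/
def PF (H : AddSubmonoid ℕ) : Set ℕ := {f | f ∉ H ∧ ∀ h ∈ H, h ≠ 0 → f + h ∈ H}

/-- The canonical relative ideal `Ω_H = {x ∈ ℤ : F − x ∉ H}`, where `F` is the
Frobenius number of `H`. -/
def Omega (H : AddSubmonoid ℕ) (F : ℕ) : Set ℤ := {x : ℤ | (F : ℤ) - x ∉ HZ H}

/-- The anti-canonical relative ideal `Ω_H⁻¹ = {z ∈ ℤ : z + Ω_H ⊆ H}`. -/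
def OmegaInv (H : AddSubmonoid ℕ) (F : ℕ) : Set ℤ :=
  {z : ℤ | ∀ w ∈ Omega H F, z + w ∈ HZ H}

/-!
Every element of `H = ⟨a, a + d, …, a + (e - 1)d⟩` has the form `q a + t d` with
`t ≤ q (e - 1)`, and since `gcd (a, d) = 1` the form with `t < a` is unique; hence for `t < a`,
`q a + t d ∈ H ↔ t ≤ q (e - 1)`. A pseudo-Frobenius number `f` is then `m a + t d` with
`m (e - 1) < t < a`. Testing `f + (a + j d) ∈ H` at `j = e - 1` shows `t ≥ a - (e - 1)`, and then at
`j = a - 1 - t` gives `a - 1 ≤ (m + 1)(e - 1)`, which pins `m = k`. Conversely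
`a - 1 ≤ (k + 1)(e - 1)` puts every `(k + 1) a + s d` in `H`, so each `k a + t d` with
`k (e - 1) < t < a` is pseudo-Frobenius.
-/

namespace AddSubmonoid

theorem add_mem_closure_of_forall_add_mem {M : Type*} [AddMonoid M] {S : Set M} {f x : M}
    (hf : ∀ s ∈ S, s ≠ 0 → f + s ∈ closure S) (hx : x ∈ closure S) (hx0 : x ≠ 0) :
    f + x ∈ closure S := by
  suffices ∀ x ∈ closure S, x = 0 ∨ f + x ∈ closure S from (this x hx).resolve_left hx0
  intro x hx
  induction hx using closure_induction with
  | mem s hs => exact or_iff_not_imp_left.2 (hf s hs)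
  | zero => exact .inl rfl
  | add x y _ hy ihx ihy =>
    rcases ihx with rfl | hx
    · simpa using ihy
    · exact .inr (add_assoc f x y ▸ add_mem hx hy)

end AddSubmonoid

theorem mem_PF_closure_iff {S : Set ℕ} {f : ℕ} :
    f ∈ PF (AddSubmonoid.closure S) ↔
      f ∉ AddSubmonoid.closure S ∧ ∀ s ∈ S, s ≠ 0 → f + s ∈ AddSubmonoid.closure S :=
  and_congr_right fun _ =>
    ⟨fun h s hs => h s (AddSubmonoid.subset_closure hs),
      fun h _ hx => AddSubmonoid.add_mem_closure_of_forall_add_mem h hx⟩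

def arithmeticSemigroup (e a d : ℕ) : AddSubmonoid ℕ :=
  AddSubmonoid.closure (Set.range fun i : Fin e => a + (i : ℕ) * d)

theorem Nat.mul_add_mul_eq_div_mod (q s a d : ℕ) :
    q * a + s * d = (q + s / a * d) * a + s % a * d := by
  conv_lhs => rw [← Nat.mod_add_div s a]
  ring

theorem Nat.eq_and_eq_of_mul_add_mul_eq {a d q q' t t' : ℕ} (hcop : a.Coprime d)
    (ht : t < a) (ht' : t' < a) (h : q * a + t * d = q' * a + t' * d) : q = q' ∧ t = t' := by
  have htt : t = t' := by
    refine Nat.ModEq.eq_of_lt_of_lt (Nat.ModEq.cancel_right_of_coprime hcop ?_) ht ht'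
    simpa only [Nat.ModEq, Nat.mul_add_mod_self_right] using congrArg (· % a) h
  subst htt
  exact ⟨Nat.eq_of_mul_eq_mul_right (by omega) (Nat.add_right_cancel h), rfl⟩

section ArithmeticSemigroup

variable {e a d : ℕ}

theorem add_mul_mem_arithmeticSemigroup {j : ℕ} (hj : j < e) :
    a + j * d ∈ arithmeticSemigroup e a d :=
  AddSubmonoid.subset_closure ⟨⟨j, hj⟩, rfl⟩

theorem exists_of_mem_arithmeticSemigroup {n : ℕ} (hn : n ∈ arithmeticSemigroup e a d) :
    ∃ q t, t ≤ q * (e - 1) ∧ n = q * a + t * d := by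
  induction hn using AddSubmonoid.closure_induction with
  | mem x hx =>
    obtain ⟨i, rfl⟩ := hx
    exact ⟨1, i, by omega, by ring⟩
  | zero => exact ⟨0, 0, Nat.zero_le _, by simp⟩
  | add x y _ _ ihx ihy =>
    obtain ⟨q, t, ht, rfl⟩ := ihx
    obtain ⟨q', t', ht', rfl⟩ := ihy
    exact ⟨q + q', t + t', by rw [add_mul]; omega, by ring⟩

theorem exists_lt_of_mem_arithmeticSemigroup (ha : 0 < a) {n : ℕ}
    (hn : n ∈ arithmeticSemigroup e a d) :
    ∃ q t, t < a ∧ t ≤ q * (e - 1) ∧ n = q * a + t * d := by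
  obtain ⟨q, t, ht, rfl⟩ := exists_of_mem_arithmeticSemigroup hn
  refine ⟨q + t / a * d, t % a, Nat.mod_lt t ha, ?_, Nat.mul_add_mul_eq_div_mod q t a d⟩
  calc t % a ≤ q * (e - 1) := (Nat.mod_le t a).trans ht
    _ ≤ (q + t / a * d) * (e - 1) := Nat.mul_le_mul_right _ (Nat.le_add_right _ _)

theorem mul_add_mul_mem_arithmeticSemigroup (he : 0 < e) {q t : ℕ} (ht : t ≤ q * (e - 1)) :
    q * a + t * d ∈ arithmeticSemigroup e a d := by
  induction q generalizing t with
  | zero => simp_all [zero_mem]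
  | succ q ih =>
    obtain ⟨s, hs, u, hu, rfl⟩ : ∃ s < e, ∃ u ≤ q * (e - 1), t = s + u :=
      ⟨min t (e - 1), by omega, t - min t (e - 1), by rw [add_one_mul] at ht; omega, by omega⟩
    rw [show (q + 1) * a + (s + u) * d = (a + s * d) + (q * a + u * d) by ring]
    exact add_mem (add_mul_mem_arithmeticSemigroup hs) (ih hu)

theorem mul_add_mul_mem_arithmeticSemigroup_iff (he : 0 < e) (hcop : a.Coprime d) {q t : ℕ}
    (ht : t < a) : q * a + t * d ∈ arithmeticSemigroup e a d ↔ t ≤ q * (e - 1) := by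
  refine ⟨fun h => ?_, mul_add_mul_mem_arithmeticSemigroup he⟩
  obtain ⟨q', t', ht', hle, heq⟩ := exists_lt_of_mem_arithmeticSemigroup (by omega) h
  obtain ⟨rfl, rfl⟩ := Nat.eq_and_eq_of_mul_add_mul_eq hcop ht ht' heq
  exact hle

theorem mul_add_mul_mem_arithmeticSemigroup_of_le (he : 0 < e) (ha : 0 < a) {q : ℕ}
    (hq : a - 1 ≤ q * (e - 1)) (s : ℕ) : q * a + s * d ∈ arithmeticSemigroup e a d := by
  rw [Nat.mul_add_mul_eq_div_mod q s a d]
  refine mul_add_mul_mem_arithmeticSemigroup he ?_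
  calc s % a ≤ q * (e - 1) := by have := Nat.mod_lt s ha; omega
    _ ≤ (q + s / a * d) * (e - 1) := Nat.mul_le_mul_right _ (Nat.le_add_right _ _)

theorem mem_PF_arithmeticSemigroup_iff_forall (ha : 0 < a) {f : ℕ} :
    f ∈ PF (arithmeticSemigroup e a d) ↔
      f ∉ arithmeticSemigroup e a d ∧ ∀ j < e, f + (a + j * d) ∈ arithmeticSemigroup e a d := by
  have hgen0 : ∀ j, a + j * d ≠ 0 := fun j => by omega
  rw [arithmeticSemigroup, mem_PF_closure_iff]
  simp only [Set.forall_mem_range, Fin.forall_iff, ne_eq, hgen0, not_false_eq_true, forall_const]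

theorem exists_of_mem_PF_arithmeticSemigroup (he : 0 < e) (ha : 0 < a) {f : ℕ}
    (hf : f ∈ PF (arithmeticSemigroup e a d)) :
    ∃ m t, t < a ∧ m * (e - 1) < t ∧ f = m * a + t * d := by
  rw [mem_PF_arithmeticSemigroup_iff_forall ha] at hf
  have hfa : f + a ∈ arithmeticSemigroup e a d := by simpa using hf.2 0 he
  obtain ⟨q, t, hta, htq, heq⟩ := exists_lt_of_mem_arithmeticSemigroup ha hfa
  obtain _ | m := q
  · rw [zero_mul, Nat.le_zero] at htq
    subst htq
    omega
  have hf_eq : f = m * a + t * d := by rw [add_one_mul] at heq; omega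
  refine ⟨m, t, hta, not_le.1 fun hle => hf.1 ?_, hf_eq⟩
  exact hf_eq ▸ mul_add_mul_mem_arithmeticSemigroup he hle

variable {k τ : ℕ}

theorem mem_PF_arithmeticSemigroup_iff (hcop : a.Coprime d) (hka : a = k * (e - 1) + τ + 1)
    (hτ1 : 1 ≤ τ) (hτ2 : τ ≤ e - 1) {f : ℕ} :
    f ∈ PF (arithmeticSemigroup e a d) ↔ ∃ t, k * (e - 1) < t ∧ t < a ∧ f = k * a + t * d := by
  have he : 0 < e := by omega
  have ha : 0 < a := by omega
  constructor
  · intro hf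
    obtain ⟨m, t, hta, hmt, rfl⟩ := exists_of_mem_PF_arithmeticSemigroup he ha hf
    rw [mem_PF_arithmeticSemigroup_iff_forall ha] at hf
    have hgen : ∀ j < e, t + j < a → t + j ≤ (m + 1) * (e - 1) := fun j hj htj => by
      refine (mul_add_mul_mem_arithmeticSemigroup_iff he hcop htj).1 ?_
      rw [show (m + 1) * a + (t + j) * d = m * a + t * d + (a + j * d) by ring]
      exact hf.2 j hj
    have hte : a ≤ t + (e - 1) := by
      by_contra! h
      have := hgen (e - 1) (by omega) h
      rw [add_one_mul] at this
      omega
    have hmax := hgen (a - 1 - t) (by omega) (by omega)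
    have hkm : k < m + 1 := Nat.lt_of_mul_lt_mul_right (a := e - 1) (by omega)
    have hmk : m < k + 1 := Nat.lt_of_mul_lt_mul_right (a := e - 1) (by rw [add_one_mul]; omega)
    obtain rfl : m = k := by omega
    exact ⟨t, hmt, hta, rfl⟩
  · rintro ⟨t, hkt, hta, rfl⟩
    have hak : a - 1 ≤ (k + 1) * (e - 1) := by rw [add_one_mul]; omega
    refine (mem_PF_arithmeticSemigroup_iff_forall ha).2 ⟨fun hmem => ?_, fun j _ => ?_⟩
    · have := (mul_add_mul_mem_arithmeticSemigroup_iff he hcop hta).1 hmem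
      omega
    · rw [show k * a + t * d + (a + j * d) = (k + 1) * a + (t + j) * d by ring]
      exact mul_add_mul_mem_arithmeticSemigroup_of_le he ha hak _

end ArithmeticSemigroup

theorem arithmetic_pf_general (e a d : ℕ) (hd : 0 < d)
    (hcop : Nat.Coprime a d)
    (H : AddSubmonoid ℕ)
    (hH : H = AddSubmonoid.closure (Set.range fun i : Fin e => a + (i : ℕ) * d))
    (k τ : ℕ) (hka : a = k * (e - 1) + τ + 1) (hτ1 : 1 ≤ τ) (hτ2 : τ ≤ e - 1) :
    PF H = {x : ℕ | ∃ i < τ, x = a * k + d * (a - 1) - i * d} ∧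
      (PF H).ncard = τ := by
  have hFr : ∀ i t, i + t = a - 1 → a * k + d * (a - 1) - i * d = k * a + t * d := by
    intro i t h
    rw [← h]
    exact Nat.sub_eq_of_eq_add (by ring)
  have hPF : PF H = (fun i => a * k + d * (a - 1) - i * d) '' Set.Iio τ := by
    ext f
    rw [hH, ← arithmeticSemigroup, mem_PF_arithmeticSemigroup_iff hcop hka hτ1 hτ2]
    constructor
    · rintro ⟨t, hkt, hta, rfl⟩
      exact ⟨a - 1 - t, by simp only [Set.mem_Iio]; omega, hFr _ _ (by omega)⟩
    · rintro ⟨i, hi, rfl⟩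
      rw [Set.mem_Iio] at hi
      exact ⟨a - 1 - i, by omega, by omega, hFr _ _ (by omega)⟩
  have hinj : Set.InjOn (fun i => a * k + d * (a - 1) - i * d) (Set.Iio τ) := by
    intro i hi j hj hij
    rw [Set.mem_Iio] at hi hj
    dsimp only at hij
    rw [hFr i (a - 1 - i) (by omega), hFr j (a - 1 - j) (by omega)] at hij
    have := Nat.eq_of_mul_eq_mul_right hd (Nat.add_left_cancel hij)
    omega
  refine ⟨hPF.trans ?_, by rw [hPF, hinj.ncard_image, Set.ncard_Iio_nat]⟩
  ext x
  simp [eq_comm]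

/-- Let `e > 2` and `H = ⟨a, a+d, …, a+(e−1)d⟩` with `gcd(a,d) = 1`, `d ≥ 1`,
`e ≤ a`. Write `a = k(e−1) + τ + 1` with `1 ≤ τ ≤ e−1`. Then
`PF(H) = {Fr(H) − (τ−1)d, …, Fr(H) − d, Fr(H)}` with `Fr(H) = ak + d(a−1)`;
in particular the type of `H` is `τ`. -/
theorem arithmetic_pf (e a d : ℕ) (he : 2 < e) (ha : 0 < a) (hd : 0 < d)
    (hcop : Nat.Coprime a d) (hea : e ≤ a)
    (H : AddSubmonoid ℕ)
    (hH : H = AddSubmonoid.closure (Set.range fun i : Fin e => a + (i : ℕ) * d))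
    (k τ : ℕ) (hka : a = k * (e - 1) + τ + 1) (hτ1 : 1 ≤ τ) (hτ2 : τ ≤ e - 1) :
    PF H = {x : ℕ | ∃ i < τ, x = a * k + d * (a - 1) - i * d} ∧
      (PF H).ncard = τ :=
  arithmetic_pf_general e a d hd hcop H hH k τ hka hτ1 hτ2
end

section
/- Let e > 2 and H = ⟨a, a+d, …, a+(e−1)d⟩ with gcd(a,d) = 1 and e ≤ a. Then H is nearly Gorenstein, i.e., every nonzero element of H belongs to tr(H) = Ω_H + Ω_H^{-1}. -/
open Pointwise


/-!
Every integer is `k a + t d` with `0 ≤ t < a` (as `gcd(a, d) = 1`), and it lies in `H` iff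
`t ≤ k (e - 1)`. The trace is an ideal of `H`, so it suffices to put each generator
`g = a + s d` in it, and `g ∈ tr(H)` as soon as some gap `c` has `g + c - v ∈ H` for every gap `v`.
Writing `a - 2 = Q (e - 1) + r` with `0 ≤ r < e - 1`, the gap `c = Q a + (a - 1 - i) d` with
`i = max 0 (s + r + 1 - e)` does it.
-/

theorem add_natCast_mem_HZ {H : AddSubmonoid ℕ} {z : ℤ} {h : ℕ} (hz : z ∈ HZ H) (hh : h ∈ H) :
    z + h ∈ HZ H := by
  obtain ⟨m, hm, rfl⟩ := hz
  exact ⟨m + h, add_mem hm hh, by push_cast; rfl⟩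

section Trace

variable {H : AddSubmonoid ℕ} {F : ℕ}

theorem add_natCast_mem_OmegaInv {z : ℤ} {h : ℕ} (hz : z ∈ OmegaInv H F) (hh : h ∈ H) :
    z + h ∈ OmegaInv H F := fun w hw => by
  rw [add_right_comm]
  exact add_natCast_mem_HZ (hz w hw) hh

theorem add_natCast_mem_trace {y : ℤ} {h : ℕ} (hy : y ∈ Omega H F + OmegaInv H F) (hh : h ∈ H) :
    y + h ∈ Omega H F + OmegaInv H F := by
  obtain ⟨w, hw, z, hz, rfl⟩ := hy
  exact ⟨w, hw, z + h, add_natCast_mem_OmegaInv hz hh, by ring⟩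

theorem mem_trace_of_not_mem_HZ {g c : ℤ} (hc : c ∉ HZ H)
    (hgc : ∀ v ∉ HZ H, g + c - v ∈ HZ H) : g ∈ Omega H F + OmegaInv H F :=
  ⟨F - c, by simpa [Omega] using hc, g - F + c,
    fun w hw => by convert hgc _ hw using 1; ring, by ring⟩

theorem natCast_mem_trace_of_mem_closure {S : Set ℕ}
    (hS : ∀ s ∈ S, (s : ℤ) ∈ Omega (AddSubmonoid.closure S) F + OmegaInv (AddSubmonoid.closure S) F)
    {n : ℕ} (hn : n ∈ AddSubmonoid.closure S) (hn0 : n ≠ 0) :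
    (n : ℤ) ∈ Omega (AddSubmonoid.closure S) F + OmegaInv (AddSubmonoid.closure S) F := by
  induction hn using AddSubmonoid.closure_induction with
  | mem s hs => exact hS s hs
  | zero => exact absurd rfl hn0
  | add m n hm hn ihm ihn =>
    rcases eq_or_ne m 0 with rfl | hm0
    · simpa using ihn (by simpa using hn0)
    · exact_mod_cast add_natCast_mem_trace (ihm hm0) hn

end Trace

theorem exists_eq_mul_add_mul_of_isCoprime {a d : ℤ} (ha : 0 < a) (h : IsCoprime a d) (v : ℤ) :
    ∃ k t : ℤ, 0 ≤ t ∧ t < a ∧ v = k * a + t * d := by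
  obtain ⟨p, q, hpq⟩ := h
  refine ⟨v * p + v * q / a * d, v * q % a, Int.emod_nonneg _ ha.ne', Int.emod_lt_of_pos _ ha, ?_⟩
  linear_combination (-v) * hpq - d * Int.mul_ediv_add_emod (v * q) a

theorem exists_gap_coeffs (a : ℕ) {e s : ℕ} (he : 1 < e) (hs : s < e) :
    ∃ Q i : ℤ, 0 ≤ i ∧ i ≤ s ∧ a + s ≤ Q * (e - 1) + i + e + 1 ∧ Q * (e - 1) + i + 2 ≤ a := by
  obtain ⟨Q, r, hr0, hre, hQr⟩ : ∃ Q r : ℤ, 0 ≤ r ∧ r < e - 1 ∧ Q * (e - 1) + r = a - 2 :=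
    ⟨_, _, Int.emod_nonneg _ (by omega), Int.emod_lt_of_pos _ (by omega),
      Int.ediv_mul_add_emod _ _⟩
  refine ⟨Q, max 0 (s + r + 1 - e), ?_, ?_, ?_, ?_⟩ <;> omega

def arithSemigroup (e a d : ℕ) : AddSubmonoid ℕ :=
  AddSubmonoid.closure (Set.range fun i : Fin e => a + (i : ℕ) * d)

namespace arithSemigroup

variable {e a d : ℕ}

theorem mul_add_mul_mem (he : 0 < e) {k t : ℕ} (ht : t ≤ k * (e - 1)) :
    k * a + t * d ∈ arithSemigroup e a d := by
  induction k generalizing t with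
  | zero => simp_all [zero_mem]
  | succ k ih =>
    set s := min t (e - 1)
    have hgen : a + s * d ∈ arithSemigroup e a d :=
      AddSubmonoid.subset_closure ⟨⟨s, by omega⟩, rfl⟩
    have hrest := ih (t := t - s) (by rw [Nat.succ_mul] at ht; omega)
    convert add_mem hgen hrest using 1
    have : s * d ≤ t * d := Nat.mul_le_mul_right d (min_le_left t (e - 1))
    rw [Nat.sub_mul, Nat.succ_mul]
    omega

theorem exists_mul_add_mul_of_mem {n : ℕ} (hn : n ∈ arithSemigroup e a d) :
    ∃ k t : ℕ, t ≤ k * (e - 1) ∧ n = k * a + t * d := by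
  induction hn using AddSubmonoid.closure_induction with
  | mem x hx =>
    obtain ⟨i, rfl⟩ := hx
    exact ⟨1, i, by omega, by ring⟩
  | zero => exact ⟨0, 0, by simp, by simp⟩
  | add x y _ _ hx hy =>
    obtain ⟨k₁, t₁, h₁, rfl⟩ := hx
    obtain ⟨k₂, t₂, h₂, rfl⟩ := hy
    exact ⟨k₁ + k₂, t₁ + t₂, by rw [add_mul]; omega, by ring⟩

theorem mul_add_mul_mem_HZ (he : 1 < e) {k t : ℤ} (ht : 0 ≤ t) (htk : t ≤ k * (e - 1)) :
    k * a + t * d ∈ HZ (arithSemigroup e a d) := by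
  have hk : 0 ≤ k := by
    by_contra! hk
    have : (0 : ℤ) < e - 1 := by omega
    nlinarith
  lift k to ℕ using hk
  lift t to ℕ using ht
  refine ⟨k * a + t * d, mul_add_mul_mem (by omega) ?_, by push_cast; ring⟩
  zify [he.le]
  exact htk

theorem le_mul_of_mul_add_mul_mem_HZ (he : 0 < e) (hcop : a.Coprime d) {k t : ℤ} (ht : 0 ≤ t)
    (hta : t < a) (h : k * a + t * d ∈ HZ (arithSemigroup e a d)) : t ≤ k * (e - 1) := by
  obtain ⟨n, hn, hkt⟩ := h
  obtain ⟨k', t', ht', rfl⟩ := exists_mul_add_mul_of_mem hn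
  push_cast at hkt
  zify [he] at ht'
  have hco : IsCoprime (a : ℤ) d := Nat.isCoprime_iff_coprime.mpr hcop
  obtain ⟨m, hm⟩ : (a : ℤ) ∣ t' - t :=
    hco.dvd_of_dvd_mul_right ⟨k - k', by linear_combination hkt⟩
  have hm0 : 0 ≤ m := by
    by_contra! hm0
    nlinarith
  have hkk : k = k' + m * d := by
    have : (a : ℤ) * (k - k' - m * d) = a * 0 := by linear_combination hm * d - hkt
    linarith [mul_left_cancel₀ (by omega) this]
  have : (0 : ℤ) ≤ m * d := by positivity
  nlinarith

theorem natCast_generator_mem_trace (he : 1 < e) (hea : e ≤ a) (hcop : a.Coprime d) {s : ℕ}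
    (hs : s < e) (F : ℕ) :
    ((a + s * d : ℕ) : ℤ) ∈ Omega (arithSemigroup e a d) F + OmegaInv (arithSemigroup e a d) F := by
  obtain ⟨Q, i, hi0, his, hlow, hhigh⟩ := exists_gap_coeffs a he hs
  refine mem_trace_of_not_mem_HZ (c := Q * a + (a - 1 - i) * d) ?_ ?_
  · intro hc
    have := le_mul_of_mul_add_mul_mem_HZ (by omega) hcop (by omega) (by omega) hc
    linarith
  · intro v hv
    obtain ⟨k, t, ht0, hta, rfl⟩ :=
      exists_eq_mul_add_mul_of_isCoprime (by omega) (Nat.isCoprime_iff_coprime.mpr hcop) v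
    have hkt : k * (e - 1) < t := by
      by_contra! h
      exact hv (mul_add_mul_mem_HZ he ht0 h)
    have : ((a + s * d : ℕ) : ℤ) + (Q * a + (a - 1 - i) * d) - (k * a + t * d) =
        (Q + 1 - k) * a + (a - 1 + s - i - t) * d := by push_cast; ring
    rw [this]
    apply mul_add_mul_mem_HZ he <;> linarith

end arithSemigroup

theorem arithmetic_nearly_gorenstein_general (e a d : ℕ) (he : 2 < e) (hcop : Nat.Coprime a d) (hea : e ≤ a)
    (H : AddSubmonoid ℕ)
    (hH : H = AddSubmonoid.closure (Set.range fun i : Fin e => a + (i : ℕ) * d))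
    (F : ℕ) :
    ∀ x ∈ HZ H, x ≠ 0 → x ∈ Omega H F + OmegaInv H F := by
  subst hH
  rintro _ ⟨n, hn, rfl⟩ hn0
  refine natCast_mem_trace_of_mem_closure ?_ hn (by exact_mod_cast hn0)
  rintro _ ⟨s, rfl⟩
  exact arithSemigroup.natCast_generator_mem_trace (by omega) hea hcop s.isLt F

/-- Let `e > 2` and `H = ⟨a, a+d, …, a+(e−1)d⟩` with `gcd(a,d) = 1` and
`e ≤ a`. Then `H` is nearly Gorenstein: every nonzero element of `H` lies in
`tr(H) = Ω_H + Ω_H⁻¹`. -/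
theorem arithmetic_nearly_gorenstein (e a d : ℕ) (he : 2 < e) (ha : 0 < a)
    (hd : 0 < d) (hcop : Nat.Coprime a d) (hea : e ≤ a)
    (H : AddSubmonoid ℕ)
    (hH : H = AddSubmonoid.closure (Set.range fun i : Fin e => a + (i : ℕ) * d))
    (F : ℕ) (hF : IsGreatest {x : ℕ | x ∉ H} F) :
    ∀ x ∈ HZ H, x ≠ 0 → x ∈ Omega H F + OmegaInv H F :=
  arithmetic_nearly_gorenstein_general e a d he hcop hea H hH F
end
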